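/- arXiv:1502.02613 — 11 statements merged into one kernel-verified Lean document; each statement's English description precedes it below -/
import Mathlib

section
/- Suppose x⁺ ∈ E is an ε-inexact proximal-gradient step from w̄ ∈ E with step size β > 0, and suppose β satisfies the majorization condition at (x⁺, w̄). Then for every x ∈ E one has f(x) − f(x⁺) ≥ (1/(2β)) · (‖x⁺ − x‖² − ‖w̄ − x‖² − ε²). -/
/-!
Convexity bounds `L x` below by the linearization of `L` at `w̄`, and majorization bounds
`L x⁺` above by the same linearization plus `‖x⁺ - w̄‖² / (2β)`. Adding the
`ε²/(2β)`-subgradient inequality for `R` at `x⁺`, the gradient terms cancel and what remains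
is `β⁻¹ ⟪x - x⁺, w̄ - x⁺⟫`, which the three-point identity for squared distances rewrites
as the claimed bound.
-/

open RealInnerProductSpace

theorem ConvexOn.add_fderiv_sub_le {E : Type*} [NormedAddCommGroup E] [NormedSpace ℝ E]
    {s : Set E} {f : E → ℝ} {f' : E →L[ℝ] ℝ} {x y : E}
    (hf : ConvexOn ℝ s f) (hx : x ∈ s) (hy : y ∈ s) (hf' : HasFDerivAt f f' x) :
    f x + f' (y - x) ≤ f y := by
  have hline : HasDerivAt (f ∘ AffineMap.lineMap (k := ℝ) x y) (f' (y - x)) 0 := by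
    refine HasFDerivAt.comp_hasDerivAt (0 : ℝ) ?_ AffineMap.hasDerivAt_lineMap
    simpa using hf'
  have hslope := (hf.comp_affineMap (AffineMap.lineMap (k := ℝ) x y)).le_slope_of_hasDerivAt
    (by simpa using hx) (by simpa using hy) one_pos hline
  simp only [slope_def_field, Function.comp_apply, AffineMap.lineMap_apply_zero,
    AffineMap.lineMap_apply_one, sub_zero, div_one] at hslope
  linarith

theorem ConvexOn.add_inner_gradient_sub_le {E : Type*} [NormedAddCommGroup E]
    [InnerProductSpace ℝ E] [CompleteSpace E] {s : Set E} {f : E → ℝ} {g x y : E}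
    (hf : ConvexOn ℝ s f) (hx : x ∈ s) (hy : y ∈ s) (hg : HasGradientAt f g x) :
    f x + ⟪g, y - x⟫ ≤ f y :=
  hf.add_fderiv_sub_le hx hy (hasGradientAt_iff_hasFDerivAt.mp hg)

theorem norm_sub_sq_sub_norm_sub_sq {E : Type*} [NormedAddCommGroup E]
    [InnerProductSpace ℝ E] (a b c : E) :
    ‖a - c‖ ^ 2 - ‖b - c‖ ^ 2 = 2 * ⟪c - a, b - a⟫ - ‖a - b‖ ^ 2 := by
  simp only [← real_inner_self_eq_norm_sq, inner_sub_left, inner_sub_right, real_inner_comm]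
  ring

theorem pnpg_lemma1_general {E : Type*} [NormedAddCommGroup E] [InnerProductSpace ℝ E]
    [FiniteDimensional ℝ E]
    (L R f : E → ℝ) (gradL : E → E)
    (hLconv : ConvexOn ℝ Set.univ L)
    (hLgrad : ∀ x, HasGradientAt L (gradL x) x)
    (hf : ∀ x, f x = L x + R x)
    (wbar xplus : E) (β ε : ℝ) (hβ : 0 < β)
    -- ε-inexact proximal-gradient step:
    -- (w̄ − β∇L(w̄) − x⁺)/β ∈ ∂_{ε²/(2β)} R(x⁺)
    (hprox : ∀ z, R z ≥ R xplus +
      ⟪z - xplus, β⁻¹ • (wbar - β • gradL wbar - xplus)⟫ - ε ^ 2 / (2 * β))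
    -- majorization condition at (x⁺, w̄)
    (hmaj : L xplus ≤ L wbar + ⟪xplus - wbar, gradL wbar⟫ + ‖xplus - wbar‖ ^ 2 / (2 * β)) :
    ∀ x : E, f x - f xplus ≥
      (1 / (2 * β)) * (‖xplus - x‖ ^ 2 - ‖wbar - x‖ ^ 2 - ε ^ 2) := by
  intro x
  set g := gradL wbar
  set u := β⁻¹ • (wbar - β • g - xplus)
  have hL : ⟪x - xplus, g⟫ - ‖xplus - wbar‖ ^ 2 / (2 * β) ≤ L x - L xplus := by
    have hsupport :=
      hLconv.add_inner_gradient_sub_le (Set.mem_univ _) (Set.mem_univ x) (hLgrad wbar)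
    have hsplit : ⟪x - xplus, g⟫ = ⟪g, x - wbar⟫ - ⟪xplus - wbar, g⟫ := by
      rw [real_inner_comm (x - wbar), ← inner_sub_left, sub_sub_sub_cancel_right]
    linarith
  have hR : ⟪x - xplus, u⟫ - ε ^ 2 / (2 * β) ≤ R x - R xplus := by linarith [hprox x]
  have hgu : g + u = β⁻¹ • (wbar - xplus) := by
    simp only [u, smul_sub, smul_smul, inv_mul_cancel₀ hβ.ne', one_smul]
    abel
  rw [hf, hf, ge_iff_le]
  calc (1 / (2 * β)) * (‖xplus - x‖ ^ 2 - ‖wbar - x‖ ^ 2 - ε ^ 2)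
      = ⟪x - xplus, β⁻¹ • (wbar - xplus)⟫ - ‖xplus - wbar‖ ^ 2 / (2 * β) - ε ^ 2 / (2 * β) := by
        rw [norm_sub_sq_sub_norm_sub_sq, real_inner_smul_right]
        field_simp
    _ = (⟪x - xplus, g⟫ - ‖xplus - wbar‖ ^ 2 / (2 * β)) + (⟪x - xplus, u⟫ - ε ^ 2 / (2 * β)) := by
        rw [← hgu, inner_add_right]
        ring
    _ ≤ (L x - L xplus) + (R x - R xplus) := add_le_add hL hR
    _ = L x + R x - (L xplus + R xplus) := by ring

/-- If `x⁺` is an `ε`-inexact proximal-gradient step from `w̄` with step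
size `β > 0` satisfying the majorization condition at `(x⁺, w̄)`, then for every `x`,
`f x − f x⁺ ≥ (1/(2β)) (‖x⁺ − x‖² − ‖w̄ − x‖² − ε²)`. -/
theorem pnpg_lemma1 {E : Type*} [NormedAddCommGroup E] [InnerProductSpace ℝ E]
    [FiniteDimensional ℝ E]
    (L R f : E → ℝ) (gradL : E → E)
    (hLconv : ConvexOn ℝ Set.univ L)
    (hLgrad : ∀ x, HasGradientAt L (gradL x) x)
    (hRconv : ConvexOn ℝ Set.univ R)
    (hf : ∀ x, f x = L x + R x)
    (wbar xplus : E) (β ε : ℝ) (hβ : 0 < β) (hε : 0 ≤ ε)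
    -- ε-inexact proximal-gradient step:
    -- (w̄ − β∇L(w̄) − x⁺)/β ∈ ∂_{ε²/(2β)} R(x⁺)
    (hprox : ∀ z, R z ≥ R xplus +
      ⟪z - xplus, β⁻¹ • (wbar - β • gradL wbar - xplus)⟫ - ε ^ 2 / (2 * β))
    -- majorization condition at (x⁺, w̄)
    (hmaj : L xplus ≤ L wbar + ⟪xplus - wbar, gradL wbar⟫ + ‖xplus - wbar‖ ^ 2 / (2 * β)) :
    ∀ x : E, f x - f xplus ≥
      (1 / (2 * β)) * (‖xplus - x‖ ^ 2 - ‖wbar - x‖ ^ 2 - ε ^ 2) :=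
  pnpg_lemma1_general L R f gradL hLconv hLgrad hf wbar xplus β ε hβ hprox hmaj
end

section
/- Suppose x⁺ ∈ E is an ε-inexact proximal-gradient step from the point x ∈ E (i.e., with w̄ = x) with step size β > 0, and suppose β satisfies the majorization condition at (x⁺, x). Then f(x⁺) ≤ f(x) − (1/(2β)) · (‖x⁺ − x‖² − ε²); in particular, if ε² ≤ ‖x⁺ − x‖², then f(x⁺) ≤ f(x). -/
open RealInnerProductSpace

/-!
Testing the `ε²/(2β)`-subgradient inequality of the proximal step at `z = x` bounds `R x⁺` by
`R x - ‖x⁺ - x‖²/β - ⟪x⁺ - x, ∇L x⟫ + ε²/(2β)`. The majorization condition bounds `L x⁺` by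
`L x + ⟪x⁺ - x, ∇L x⟫ + ‖x⁺ - x‖²/(2β)`; adding the two, the gradient terms cancel and half of
the quadratic term survives.
-/

section

variable {E : Type*} [NormedAddCommGroup E] [InnerProductSpace ℝ E]

/-- `g ∈ ∂_δ R(y)`. -/
def IsEpsSubgradient (R : E → ℝ) (δ : ℝ) (y g : E) : Prop :=
  ∀ z, R z ≥ R y + ⟪z - y, g⟫ - δ

theorem IsEpsSubgradient.le_sub_inner_add {R : E → ℝ} {δ : ℝ} {y g : E}
    (h : IsEpsSubgradient R δ y g) (x : E) : R y ≤ R x - ⟪x - y, g⟫ + δ := by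
  linarith [h x]

theorem inner_sub_smul_prox_residual (x y g : E) {β : ℝ} (hβ : β ≠ 0) :
    ⟪x - y, β⁻¹ • (x - β • g - y)⟫ = ‖y - x‖ ^ 2 / β + ⟪y - x, g⟫ := by
  have hres : x - β • g - y = (x - y) - β • g := by abel
  rw [hres, real_inner_smul_right, inner_sub_right, real_inner_smul_right,
    real_inner_self_eq_norm_sq, norm_sub_rev, ← neg_sub y x, inner_neg_left]
  field_simp
  ring

theorem inexact_prox_grad_step_descent (L R : E → ℝ) (g x y : E) {β : ℝ} (hβ : β ≠ 0) (ε : ℝ)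
    (hprox : IsEpsSubgradient R (ε ^ 2 / (2 * β)) y (β⁻¹ • (x - β • g - y)))
    (hmaj : L y ≤ L x + ⟪y - x, g⟫ + ‖y - x‖ ^ 2 / (2 * β)) :
    L y + R y ≤ L x + R x - (1 / (2 * β)) * (‖y - x‖ ^ 2 - ε ^ 2) := by
  have hR := hprox.le_sub_inner_add x
  rw [inner_sub_smul_prox_residual x y g hβ] at hR
  have hhalf : ‖y - x‖ ^ 2 / β = 2 * (‖y - x‖ ^ 2 / (2 * β)) := by field_simp
  have hsplit : (1 / (2 * β)) * (‖y - x‖ ^ 2 - ε ^ 2)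
      = ‖y - x‖ ^ 2 / (2 * β) - ε ^ 2 / (2 * β) := by ring
  rw [hsplit]
  linarith

end

theorem pnpg_monotonic_general {E : Type*} [NormedAddCommGroup E] [InnerProductSpace ℝ E]
    (L R f : E → ℝ) (gradL : E → E)
    (hf : ∀ x, f x = L x + R x)
    (x xplus : E) (β ε : ℝ) (hβ : 0 < β)
    (hprox : ∀ z, R z ≥ R xplus +
      ⟪z - xplus, β⁻¹ • (x - β • gradL x - xplus)⟫ - ε ^ 2 / (2 * β))
    (hmaj : L xplus ≤ L x + ⟪xplus - x, gradL x⟫ + ‖xplus - x‖ ^ 2 / (2 * β)) :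
    f xplus ≤ f x - (1 / (2 * β)) * (‖xplus - x‖ ^ 2 - ε ^ 2) ∧
      (ε ^ 2 ≤ ‖xplus - x‖ ^ 2 → f xplus ≤ f x) := by
  have hdescent : f xplus ≤ f x - (1 / (2 * β)) * (‖xplus - x‖ ^ 2 - ε ^ 2) := by
    rw [hf, hf]
    exact inexact_prox_grad_step_descent L R (gradL x) x xplus hβ.ne' ε hprox hmaj
  refine ⟨hdescent, fun hle => ?_⟩
  have hgap : 0 ≤ (1 / (2 * β)) * (‖xplus - x‖ ^ 2 - ε ^ 2) :=
    mul_nonneg (by positivity) (sub_nonneg.mpr hle)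
  linarith

/-- If `x⁺` is an `ε`-inexact proximal-gradient step from `x`
with step size `β > 0` satisfying the majorization condition at `(x⁺, x)`, then
`f x⁺ ≤ f x − (1/(2β))(‖x⁺ − x‖² − ε²)`; in particular if `ε² ≤ ‖x⁺ − x‖²` then
`f x⁺ ≤ f x`. -/
theorem pnpg_monotonic {E : Type*} [NormedAddCommGroup E] [InnerProductSpace ℝ E]
    [FiniteDimensional ℝ E]
    (L R f : E → ℝ) (gradL : E → E)
    (hLconv : ConvexOn ℝ Set.univ L)
    (hLgrad : ∀ x, HasGradientAt L (gradL x) x)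
    (hRconv : ConvexOn ℝ Set.univ R)
    (hf : ∀ x, f x = L x + R x)
    (x xplus : E) (β ε : ℝ) (hβ : 0 < β) (hε : 0 ≤ ε)
    (hprox : ∀ z, R z ≥ R xplus +
      ⟪z - xplus, β⁻¹ • (x - β • gradL x - xplus)⟫ - ε ^ 2 / (2 * β))
    (hmaj : L xplus ≤ L x + ⟪xplus - x, gradL x⟫ + ‖xplus - x‖ ^ 2 / (2 * β)) :
    f xplus ≤ f x - (1 / (2 * β)) * (‖xplus - x‖ ^ 2 - ε ^ 2) ∧
      (ε ^ 2 ≤ ‖xplus - x‖ ^ 2 → f xplus ≤ f x) :=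
  pnpg_monotonic_general L R f gradL hf x xplus β ε hβ hprox hmaj
end

section
/- Let u > 0, a ∈ E, and ε ≥ 0. Suppose p ∈ E minimizes the function z ↦ (1/2)‖z − a‖² + u·R(z) over E, and suppose x ∈ E satisfies (a − x)/u ∈ ∂_{ε²/(2u)} R(x). Then ‖x − p‖² ≤ ε². -/
open RealInnerProductSpace

/- If `p` minimises `z ↦ ½‖z − a‖² + f z` and `a − x` is an `η`-subgradient of `f` at `x`,
comparing the objective at `x` with the subgradient inequality at `p` leaves
`½‖p − a‖² − ½‖x − a‖² + ⟪p − x, a − x⟫ ≤ η`, and the left side is exactly `½‖x − p‖²`.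
For the theorem take `f = u • R` and `η = ε² / 2`. -/

lemma norm_sub_sq_le_of_prox_le_of_approx_subgradient {E : Type*} [NormedAddCommGroup E]
    [InnerProductSpace ℝ E] {f : E → ℝ} {a p x : E} {η : ℝ}
    (hp : (1 / 2) * ‖p - a‖ ^ 2 + f p ≤ (1 / 2) * ‖x - a‖ ^ 2 + f x)
    (hx : f x + ⟪p - x, a - x⟫ - η ≤ f p) :
    ‖x - p‖ ^ 2 ≤ 2 * η := by
  have hpolar := norm_sub_sq_real (p - x) (a - x)
  rw [sub_sub_sub_cancel_right, norm_sub_rev a x] at hpolar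
  rw [norm_sub_rev]
  linarith

theorem inexact_prox_dist_general {E : Type*} [NormedAddCommGroup E] [InnerProductSpace ℝ E]
    (R : E → ℝ)
    (u : ℝ) (hu : 0 < u) (a : E) (ε : ℝ)
    (p : E) (hp : ∀ z : E, (1 / 2) * ‖p - a‖ ^ 2 + u * R p ≤ (1 / 2) * ‖z - a‖ ^ 2 + u * R z)
    (x : E)
    (hx : ∀ z, R z ≥ R x + ⟪z - x, u⁻¹ • (a - x)⟫ - ε ^ 2 / (2 * u)) :
    ‖x - p‖ ^ 2 ≤ ε ^ 2 := by
  have hxp : u * R x + ⟪p - x, a - x⟫ - ε ^ 2 / 2 ≤ u * R p := by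
    have hscaled := mul_le_mul_of_nonneg_left (hx p) hu.le
    rw [real_inner_smul_right] at hscaled
    calc u * R x + ⟪p - x, a - x⟫ - ε ^ 2 / 2
        = u * (R x + u⁻¹ * ⟪p - x, a - x⟫ - ε ^ 2 / (2 * u)) := by field_simp
      _ ≤ u * R p := hscaled
  have hdist := norm_sub_sq_le_of_prox_le_of_approx_subgradient (f := fun z => u * R z) (hp x) hxp
  linarith

/-- If `p` minimizes `z ↦ (1/2)‖z − a‖² + u R z` and
`(a − x)/u ∈ ∂_{ε²/(2u)} R(x)`, then `‖x − p‖² ≤ ε²`. -/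
theorem inexact_prox_dist {E : Type*} [NormedAddCommGroup E] [InnerProductSpace ℝ E]
    [FiniteDimensional ℝ E]
    (R : E → ℝ) (hRconv : ConvexOn ℝ Set.univ R)
    (u : ℝ) (hu : 0 < u) (a : E) (ε : ℝ) (hε : 0 ≤ ε)
    (p : E) (hp : ∀ z : E, (1 / 2) * ‖p - a‖ ^ 2 + u * R p ≤ (1 / 2) * ‖z - a‖ ^ 2 + u * R z)
    (x : E)
    (hx : ∀ z, R z ≥ R x + ⟪z - x, u⁻¹ • (a - x)⟫ - ε ^ 2 / (2 * u)) :
    ‖x - p‖ ^ 2 ≤ ε ^ 2 :=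
  inexact_prox_dist_general R u hu a ε p hp x hx
end

section
/- Let γ ≥ 2, b ∈ [0, 1/4], β' > 0, β > 0, and θ' ∈ ℝ, and define θ = 1/γ + √(b + (β'/β)·θ'²). Then θ ≤ 1/2 + √(1/4 + (β'/β)·θ'²), and consequently β·(θ² − θ) ≤ β'·θ'². -/
/-- For `γ ≥ 2`, `b ∈ [0, 1/4]`, `β', β > 0`, and
`θ = 1/γ + √(b + (β'/β) θ'²)`, one has `θ ≤ 1/2 + √(1/4 + (β'/β) θ'²)` and
consequently `β (θ² − θ) ≤ β' θ'²`. -/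
theorem momentum_update_bound (γ b β' β θ' θ : ℝ)
    (hγ : 2 ≤ γ) (hb0 : 0 ≤ b) (hb1 : b ≤ 1 / 4)
    (hβ' : 0 < β') (hβ : 0 < β)
    (hθ : θ = 1 / γ + Real.sqrt (b + (β' / β) * θ' ^ 2)) :
    θ ≤ 1 / 2 + Real.sqrt (1 / 4 + (β' / β) * θ' ^ 2) ∧
      β * (θ ^ 2 - θ) ≤ β' * θ' ^ 2 := by
  have hr : 0 ≤ (β' / β) * θ' ^ 2 := by positivity
  set s := Real.sqrt (1 / 4 + (β' / β) * θ' ^ 2) with hs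
  have hs2 : s ^ 2 = 1 / 4 + (β' / β) * θ' ^ 2 := by
    rw [hs, sq, Real.mul_self_sqrt (by linarith)]
  have hshalf : (1 : ℝ) / 2 ≤ s := by
    have : Real.sqrt (1 / 4) ≤ s := Real.sqrt_le_sqrt (by linarith)
    rwa [show (1 : ℝ) / 4 = (1 / 2) ^ 2 by norm_num, Real.sqrt_sq (by norm_num)] at this
  have h1 : θ ≤ 1 / 2 + s := by
    have hg : 1 / γ ≤ 1 / 2 := by
      apply one_div_le_one_div_of_le <;> linarith
    have hsq : Real.sqrt (b + (β' / β) * θ' ^ 2) ≤ s :=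
      Real.sqrt_le_sqrt (by linarith)
    linarith [hθ ▸ add_le_add hg hsq]
  have hθ0 : 0 ≤ θ := by
    rw [hθ]
    have : 0 < 1 / γ := by positivity
    have := Real.sqrt_nonneg (b + (β' / β) * θ' ^ 2)
    linarith
  refine ⟨h1, ?_⟩
  have key : θ ^ 2 - θ ≤ (β' / β) * θ' ^ 2 := by
    nlinarith [mul_nonneg (sub_nonneg.mpr h1) (by linarith : (0:ℝ) ≤ θ - (1/2 - s))]
  calc β * (θ ^ 2 - θ) ≤ β * ((β' / β) * θ' ^ 2) := by
        exact mul_le_mul_of_nonneg_left key hβ.le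
    _ = β' * θ' ^ 2 := by field_simp
end

section
/- For every k ≥ 1 one has θ_k·√β_k ≥ (1/γ)·Σ_{i=2}^{k} √β_i + √β_1, and consequently γ²·β_k·θ_k² ≥ (√β_1 + Σ_{i=1}^{k} √β_i)². -/
open Finset

/-! Multiplying the recurrence by `√β_{i}` and using `b ≥ 0` gives
`θ_i √β_i ≥ √β_i / γ + θ_{i-1} √β_{i-1}`; telescoping from `θ_1 √β_1 = √β_1` yields the first
bound, and multiplying it by `γ ≥ 2` and squaring yields the second. -/

lemma mul_sqrt_le_sqrt_add_div_mul_sq_mul_sqrt {b β β' θ : ℝ} (hb : 0 ≤ b) (hβ' : 0 < β') :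
    θ * √β ≤ √(b + β / β' * θ ^ 2) * √β' := by
  have hexpand : (b + β / β' * θ ^ 2) * β' = b * β' + θ ^ 2 * β := by
    field_simp
  calc θ * √β ≤ |θ| * √β := mul_le_mul_of_nonneg_right (le_abs_self θ) (Real.sqrt_nonneg β)
    _ = √(θ ^ 2 * β) := by rw [Real.sqrt_mul (sq_nonneg θ), Real.sqrt_sq_eq_abs]
    _ ≤ √((b + β / β' * θ ^ 2) * β') := by
      rw [hexpand]
      gcongr
      exact le_add_of_nonneg_left (mul_nonneg hb hβ'.le)
    _ = √(b + β / β' * θ ^ 2) * √β' := Real.sqrt_mul' _ hβ'.le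

section Momentum

variable {γ b : ℝ} {β θ : ℕ → ℝ}

lemma momentum_mul_sqrt_succ_ge (hb0 : 0 ≤ b) (hβ : ∀ i, 1 ≤ i → 0 < β i)
    (hθ : ∀ i, 2 ≤ i → θ i = 1 / γ + √(b + (β (i - 1) / β i) * (θ (i - 1)) ^ 2))
    {n : ℕ} (hn : 1 ≤ n) :
    θ n * √(β n) + 1 / γ * √(β (n + 1)) ≤ θ (n + 1) * √(β (n + 1)) := by
  have hstep := mul_sqrt_le_sqrt_add_div_mul_sq_mul_sqrt (β := β n) (θ := θ n) hb0
    (hβ (n + 1) (by omega))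
  rw [hθ (n + 1) (by omega), Nat.add_sub_cancel]
  linarith

lemma momentum_mul_sqrt_ge (hb0 : 0 ≤ b) (hβ : ∀ i, 1 ≤ i → 0 < β i) (hθ1 : θ 1 = 1)
    (hθ : ∀ i, 2 ≤ i → θ i = 1 / γ + √(b + (β (i - 1) / β i) * (θ (i - 1)) ^ 2))
    {k : ℕ} (hk : 1 ≤ k) :
    1 / γ * ∑ i ∈ Icc 2 k, √(β i) + √(β 1) ≤ θ k * √(β k) := by
  induction k, hk using Nat.le_induction with
  | base => simp [hθ1]
  | succ n hn ih =>
    have hstep := momentum_mul_sqrt_succ_ge hb0 hβ hθ hn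
    rw [sum_Icc_succ_top (by omega), mul_add]
    linarith

end Momentum

lemma sq_add_add_le_sq_mul_sq {γ s S x : ℝ} (hγ : 2 ≤ γ) (hs : 0 ≤ s) (hS : 0 ≤ S)
    (h : 1 / γ * S + s ≤ x) : (s + (s + S)) ^ 2 ≤ γ ^ 2 * x ^ 2 := by
  have hγx : S + γ * s ≤ γ * x := by
    have := mul_le_mul_of_nonneg_left h (by linarith : 0 ≤ γ)
    rwa [mul_add, ← mul_assoc, mul_one_div_cancel (by linarith), one_mul] at this
  rw [← mul_pow]
  exact pow_le_pow_left₀ (by positivity) (by nlinarith) 2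

theorem momentum_growth_general (γ b : ℝ) (hγ : 2 ≤ γ) (hb0 : 0 ≤ b)
    (β θ : ℕ → ℝ) (hβ : ∀ i, 1 ≤ i → 0 < β i)
    (hθ1 : θ 1 = 1)
    (hθ : ∀ i, 2 ≤ i → θ i = 1 / γ + Real.sqrt (b + (β (i - 1) / β i) * (θ (i - 1)) ^ 2)) :
    ∀ k, 1 ≤ k →
      θ k * Real.sqrt (β k) ≥
          (1 / γ) * (∑ i ∈ Finset.Icc 2 k, Real.sqrt (β i)) + Real.sqrt (β 1) ∧
        γ ^ 2 * β k * (θ k) ^ 2 ≥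
          (Real.sqrt (β 1) + ∑ i ∈ Finset.Icc 1 k, Real.sqrt (β i)) ^ 2 := by
  intro k hk
  have hlower := momentum_mul_sqrt_ge hb0 hβ hθ1 hθ hk
  refine ⟨hlower, ?_⟩
  have hsquare : γ ^ 2 * β k * θ k ^ 2 = γ ^ 2 * (θ k * √(β k)) ^ 2 := by
    rw [mul_pow, Real.sq_sqrt (hβ k hk).le]
    ring
  rw [ge_iff_le, hsquare, Icc_eq_cons_Ioc hk, sum_cons, ← Icc_add_one_left_eq_Ioc]
  exact sq_add_add_le_sq_mul_sq hγ (Real.sqrt_nonneg _)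
    (sum_nonneg fun i _ => Real.sqrt_nonneg _) hlower

/-- For the PNPG momentum sequence `θ_1 = 1`,
`θ_i = 1/γ + √(b + (β_{i−1}/β_i) θ_{i−1}²)` for `i ≥ 2`, one has, for every `k ≥ 1`,
`θ_k √β_k ≥ (1/γ) Σ_{i=2}^k √β_i + √β_1` and hence
`γ² β_k θ_k² ≥ (√β_1 + Σ_{i=1}^k √β_i)²`. -/
theorem momentum_growth (γ b : ℝ) (hγ : 2 ≤ γ) (hb0 : 0 ≤ b) (hb1 : b ≤ 1 / 4)
    (β θ : ℕ → ℝ) (hβ : ∀ i, 1 ≤ i → 0 < β i)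
    (hθ1 : θ 1 = 1)
    (hθ : ∀ i, 2 ≤ i → θ i = 1 / γ + Real.sqrt (b + (β (i - 1) / β i) * (θ (i - 1)) ^ 2)) :
    ∀ k, 1 ≤ k →
      θ k * Real.sqrt (β k) ≥
          (1 / γ) * (∑ i ∈ Finset.Icc 2 k, Real.sqrt (β i)) + Real.sqrt (β 1) ∧
        γ ^ 2 * β k * (θ k) ^ 2 ≥
          (Real.sqrt (β 1) + ∑ i ∈ Finset.Icc 1 k, Real.sqrt (β i)) ^ 2 :=
  momentum_growth_general γ b hγ hb0 β θ hβ hθ1 hθ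
end

section
/- For every k ≥ 1, the centered objective satisfies Δ_k ≤ γ²·(‖x_0 − x⋆‖² + E_k)/(2·β_k·(k+1)²). -/
/-!
One step of the inexact proximal-gradient method gives, for every `z`,
`2 β_i (f x_i - f z) ≤ ‖w_i - z‖² - ‖x_i - z‖² + ε_i²`. Adding this at `z = x_{i-1}` and `z = x⋆`
with weights `θ_i (θ_i - 1)` and `θ_i` turns the norms into those of
`u_i = θ_i x_i - (θ_i - 1) x_{i-1} - x⋆` and `θ_i w_i - (θ_i - 1) x_{i-1} - x⋆`. The latter is
`θ_i (w_i - c_i)` with `c_i = (1 - θ_i⁻¹) x_{i-1} + θ_i⁻¹ x⋆ ∈ C`, and projecting onto `C` does not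
increase the distance to `c_i`; before projection it is exactly `u_{i-1}`. Since
`θ_i (θ_i - 1) ≤ θ_{i-1}²` and `β_i ≤ β_{i-1}`, the energy `2 β_i θ_i² Δ_i + ‖u_i‖²` grows by at
most `θ_i² ε_i²` per step, and `γ θ_k ≥ k + 1` yields the rate.
-/

open RealInnerProductSpace Finset

theorem ConvexOn.add_le_of_hasFDerivAt {E : Type*} [NormedAddCommGroup E] [NormedSpace ℝ E]
    {f : E → ℝ} (hf : ConvexOn ℝ Set.univ f) {f' : E →L[ℝ] ℝ} {x : E} (hx : HasFDerivAt f f' x)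
    (y : E) : f x + f' (y - x) ≤ f y := by
  have hline : ConvexOn ℝ Set.univ (f ∘ AffineMap.lineMap (k := ℝ) x y) := by
    simpa using hf.comp_affineMap (AffineMap.lineMap x y)
  have hderiv : HasDerivAt (f ∘ AffineMap.lineMap (k := ℝ) x y) (f' (y - x)) 0 := by
    simpa using hx.comp_hasDerivAt_of_eq (0 : ℝ) AffineMap.hasDerivAt_lineMap (by simp)
  have := hline.le_slope_of_hasDerivAt (Set.mem_univ 0) (Set.mem_univ 1) zero_lt_one hderiv
  simp only [slope_def_field, Function.comp_apply, AffineMap.lineMap_apply_zero,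
    AffineMap.lineMap_apply_one, sub_zero, div_one] at this
  linarith

theorem ConvexOn.add_inner_le_of_hasGradientAt {E : Type*} [NormedAddCommGroup E]
    [InnerProductSpace ℝ E] [CompleteSpace E] {f : E → ℝ} (hf : ConvexOn ℝ Set.univ f) {g x : E}
    (hx : HasGradientAt f g x) (y : E) : f x + ⟪g, y - x⟫ ≤ f y :=
  hf.add_le_of_hasFDerivAt hx.hasFDerivAt y

theorem Convex.norm_sub_le_of_isNearest {E : Type*} [NormedAddCommGroup E]
    [InnerProductSpace ℝ E] {C : Set E} (hC : Convex ℝ C) {z p : E} (hp : p ∈ C)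
    (hnear : ∀ y ∈ C, ‖z - p‖ ≤ ‖z - y‖) {c : E} (hc : c ∈ C) : ‖p - c‖ ≤ ‖z - c‖ := by
  have hinf : ‖z - p‖ = ⨅ y : C, ‖z - y‖ := by
    have : Nonempty C := ⟨⟨p, hp⟩⟩
    refine le_antisymm (le_ciInf fun y => hnear y y.2) (ciInf_le ⟨0, ?_⟩ (⟨p, hp⟩ : C))
    rintro _ ⟨y, rfl⟩
    exact norm_nonneg _
  have hobtuse : ⟪z - p, c - p⟫ ≤ 0 := (norm_eq_iInf_iff_real_inner_le_zero hC hp).1 hinf c hc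
  have hsplit : ‖z - c‖ ^ 2 = ‖z - p‖ ^ 2 - 2 * ⟪z - p, c - p⟫ + ‖p - c‖ ^ 2 := by
    rw [show z - c = (z - p) - (c - p) by abel, norm_sub_sq_real, norm_sub_rev c p]
  refine (sq_le_sq₀ (norm_nonneg _) (norm_nonneg _)).1 ?_
  nlinarith [sq_nonneg ‖z - p‖]

section InnerProduct

variable {E : Type*} [NormedAddCommGroup E] [InnerProductSpace ℝ E]

theorem inexact_prox_grad_descent [CompleteSpace E] {L R : E → ℝ} {g w x : E} {β ε : ℝ}
    (hL : ConvexOn ℝ Set.univ L) (hg : HasGradientAt L g w) (hβ : 0 < β)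
    (hprox : ∀ z, R z ≥ R x + ⟪z - x, β⁻¹ • (w - β • g - x)⟫ - ε ^ 2 / (2 * β))
    (hmaj : L x ≤ L w + ⟪x - w, g⟫ + ‖x - w‖ ^ 2 / (2 * β)) (z : E) :
    2 * β * ((L + R) x - (L + R) z) ≤ ‖w - z‖ ^ 2 - ‖x - z‖ ^ 2 + ε ^ 2 := by
  have hR := hprox z
  have hLz := hL.add_inner_le_of_hasGradientAt hg z
  have hinner : ⟪z - x, β⁻¹ • (w - β • g - x)⟫ = β⁻¹ * ⟪z - x, w - x⟫ - ⟪g, z - x⟫ := by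
    rw [real_inner_smul_right, sub_right_comm, inner_sub_right, real_inner_smul_right,
      real_inner_comm g, mul_sub, inv_mul_cancel_left₀ hβ.ne']
  have hgrad : ⟪g, x - w⟫ + ⟪g, z - x⟫ = ⟪g, z - w⟫ := by
    rw [← inner_add_right, add_comm, sub_add_sub_cancel]
  have hnorm : ‖w - z‖ ^ 2 - ‖x - z‖ ^ 2 = ‖x - w‖ ^ 2 - 2 * ⟪z - x, w - x⟫ := by
    rw [show w - z = (w - x) - (z - x) by abel, norm_sub_sq_real, norm_sub_rev x w,
      norm_sub_rev x z, real_inner_comm]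
    ring
  rw [hinner] at hR
  rw [← hgrad] at hLz
  rw [real_inner_comm] at hmaj
  rw [Pi.add_apply, Pi.add_apply, hnorm]
  field_simp at hR hmaj
  linarith [mul_le_mul_of_nonneg_left hLz hβ.le]

theorem descent_extrapolated {F : E → ℝ} {w x x' s : E} {β ε θ : ℝ} (hθ : 1 ≤ θ)
    (hdesc : ∀ z, 2 * β * (F x - F z) ≤ ‖w - z‖ ^ 2 - ‖x - z‖ ^ 2 + ε ^ 2) :
    2 * β * θ ^ 2 * (F x - F s) + ‖θ • x - (θ - 1) • x' - s‖ ^ 2 ≤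
      2 * β * (θ * (θ - 1)) * (F x' - F s) + ‖θ • w - (θ - 1) • x' - s‖ ^ 2 + θ ^ 2 * ε ^ 2 := by
  have hquad : ∀ a : E, ‖θ • a - (θ - 1) • x' - s‖ ^ 2 =
      θ * (θ - 1) * ‖a - x'‖ ^ 2 + θ * ‖a - s‖ ^ 2 - (θ - 1) * ‖x' - s‖ ^ 2 := by
    intro a
    rw [show θ • a - (θ - 1) • x' - s = θ • (a - x') + (x' - s) by module,
      show a - s = (a - x') + (x' - s) by abel, norm_add_sq_real, norm_add_sq_real,
      norm_smul, real_inner_smul_left, Real.norm_eq_abs, mul_pow, sq_abs]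
    ring
  have h₁ := mul_le_mul_of_nonneg_left (hdesc x') (by nlinarith : 0 ≤ θ * (θ - 1))
  have h₂ := mul_le_mul_of_nonneg_left (hdesc s) (by linarith : 0 ≤ θ)
  rw [hquad, hquad]
  linarith

theorem norm_extrapolate_proj_sub_le {C : Set E} (hC : Convex ℝ C) {P : E → E}
    (hPmem : ∀ z, P z ∈ C) (hPproj : ∀ z, ∀ y ∈ C, ‖z - P z‖ ≤ ‖z - y‖)
    {θ θ' : ℝ} (hθ : 1 ≤ θ) {x'' x' s : E} (hx' : x' ∈ C) (hs : s ∈ C) :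
    ‖θ • P (x' + ((θ' - 1) / θ) • (x' - x'')) - (θ - 1) • x' - s‖ ≤
      ‖θ' • x' - (θ' - 1) • x'' - s‖ := by
  set y := x' + ((θ' - 1) / θ) • (x' - x'')
  set c := (1 - θ⁻¹) • x' + θ⁻¹ • s
  have hθ0 : 0 < θ := by linarith
  have hc : c ∈ C := hC hx' hs (by linarith [inv_le_one_of_one_le₀ hθ]) (by positivity) (by ring)
  have hshift : ∀ a : E, θ • a - (θ - 1) • x' - s = θ • (a - c) := by
    intro a
    simp only [c, smul_sub, smul_add, smul_smul, mul_sub, mul_inv_cancel₀ hθ0.ne', mul_one]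
    module
  have hy : θ • y - (θ - 1) • x' - s = θ' • x' - (θ' - 1) • x'' - s := by
    simp only [y, smul_add, smul_smul, mul_div_cancel₀ _ hθ0.ne']
    module
  rw [← hy, hshift, hshift, norm_smul, norm_smul]
  exact mul_le_mul_of_nonneg_left (hC.norm_sub_le_of_isNearest (hPmem y) (hPproj y) hc)
    (norm_nonneg θ)

theorem fista_step_lyapunov [CompleteSpace E] {L R : E → ℝ} {gradL : E → E}
    (hL : ConvexOn ℝ Set.univ L) (hgrad : ∀ x, HasGradientAt L (gradL x) x)
    {C : Set E} (hC : Convex ℝ C) {P : E → E} (hPmem : ∀ z, P z ∈ C)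
    (hPproj : ∀ z, ∀ y ∈ C, ‖z - P z‖ ≤ ‖z - y‖)
    {β ε θ θ' : ℝ} {x'' x' w x s : E} (hβ : 0 < β) (hθ : 1 ≤ θ) (hx' : x' ∈ C) (hs : s ∈ C)
    (hw : w = P (x' + ((θ' - 1) / θ) • (x' - x'')))
    (hprox : ∀ z, R z ≥ R x + ⟪z - x, β⁻¹ • (w - β • gradL w - x)⟫ - ε ^ 2 / (2 * β))
    (hmaj : L x ≤ L w + ⟪x - w, gradL w⟫ + ‖x - w‖ ^ 2 / (2 * β)) :
    2 * β * θ ^ 2 * ((L + R) x - (L + R) s) + ‖θ • x - (θ - 1) • x' - s‖ ^ 2 ≤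
      2 * β * (θ * (θ - 1)) * ((L + R) x' - (L + R) s) + ‖θ' • x' - (θ' - 1) • x'' - s‖ ^ 2
        + θ ^ 2 * ε ^ 2 := by
  have hproj := norm_extrapolate_proj_sub_le hC hPmem hPproj (θ' := θ') (x'' := x'') hθ hx' hs
  rw [← hw] at hproj
  refine (descent_extrapolated hθ (inexact_prox_grad_descent hL (hgrad w) hβ hprox hmaj)).trans ?_
  gcongr

end InnerProduct

section Momentum

variable {γ b : ℝ}

theorem momentum_mul_sub_one_le_sq (hγ : 2 ≤ γ) (hb0 : 0 ≤ b) (hb1 : b ≤ 1 / 4) {s : ℝ}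
    (hs : 1 ≤ s) : (1 / γ + √(b + s ^ 2)) * (1 / γ + √(b + s ^ 2) - 1) ≤ s ^ 2 := by
  have hr : s ≤ √(b + s ^ 2) := Real.le_sqrt_of_sq_le (by linarith)
  have hr2 : √(b + s ^ 2) ^ 2 = b + s ^ 2 := Real.sq_sqrt (by positivity)
  have hu : 1 / γ ≤ 1 / 2 := one_div_le_one_div_of_le two_pos hγ
  have hu0 : 0 < 1 / γ := by positivity
  nlinarith [mul_nonneg (sub_nonneg.2 (hs.trans hr)) (by linarith : 0 ≤ 1 - 2 * (1 / γ))]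

theorem momentum_seq_bounds (hγ : 2 ≤ γ) (hb0 : 0 ≤ b) {θ : ℤ → ℝ} (hθ1 : θ 1 = 1)
    (hθ : ∀ i, 2 ≤ i → θ i = 1 / γ + √(b + θ (i - 1) ^ 2)) {i : ℤ} (hi : 1 ≤ i) :
    1 ≤ θ i ∧ (i : ℝ) + 1 ≤ γ * θ i := by
  induction i, hi using Int.leInduction with
  | base => rw [hθ1]; exact ⟨le_rfl, by push_cast; linarith⟩
  | succ n hn ih =>
    have hsqrt : θ n ≤ √(b + θ n ^ 2) := Real.le_sqrt_of_sq_le (by linarith)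
    rw [hθ (n + 1) (by omega), add_sub_cancel_right]
    push_cast
    have hu0 : 0 < 1 / γ := by positivity
    refine ⟨by linarith, ?_⟩
    rw [mul_add, mul_one_div_cancel (by positivity)]
    nlinarith [mul_le_mul_of_nonneg_left hsqrt (by linarith : 0 ≤ γ)]

end Momentum

theorem le_add_sum_Icc_of_le_add {V c : ℤ → ℝ} {A : ℝ} (h₁ : V 1 ≤ A + c 1)
    (hstep : ∀ i, 2 ≤ i → V i ≤ V (i - 1) + c i) {k : ℤ} (hk : 1 ≤ k) :
    V k ≤ A + ∑ i ∈ Icc 1 k, c i := by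
  induction k, hk using Int.leInduction with
  | base => simpa using h₁
  | succ n hn ih =>
    rw [← insert_Icc_right_eq_Icc_add_one (by omega), sum_insert (by simp)]
    have := hstep (n + 1) (by omega)
    rw [add_sub_cancel_right] at this
    linarith

theorem le_sq_mul_div_of_mul_sq_mul_le {Δ β θ γ n S : ℝ} (hΔ : 0 ≤ Δ) (hβ : 0 < β) (hn : 0 < n)
    (hθ : n ≤ γ * θ) (h : 2 * β * θ ^ 2 * Δ ≤ S) : Δ ≤ γ ^ 2 * S / (2 * β * n ^ 2) := by
  rw [le_div_iff₀ (by positivity)]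
  calc Δ * (2 * β * n ^ 2) ≤ Δ * (2 * β * (γ * θ) ^ 2) := by gcongr
    _ = γ ^ 2 * (2 * β * θ ^ 2 * Δ) := by ring
    _ ≤ γ ^ 2 * S := by gcongr

theorem fista_objective_rate_general {E : Type*} [NormedAddCommGroup E]
    [InnerProductSpace ℝ E] [FiniteDimensional ℝ E]
    (L R f : E → ℝ) (gradL : E → E)
    (hLconv : ConvexOn ℝ Set.univ L)
    (hLgrad : ∀ x, HasGradientAt L (gradL x) x)
    (hf : ∀ x, f x = L x + R x)
    (C : Set E) (hCconv : Convex ℝ C)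
    (P : E → E) (hPmem : ∀ z, P z ∈ C)
    (hPproj : ∀ z, ∀ y ∈ C, ‖z - P z‖ ≤ ‖z - y‖)
    (γ b : ℝ) (hγ : 2 ≤ γ) (hb0 : 0 ≤ b) (hb1 : b ≤ 1 / 4)
    (β εs θ : ℤ → ℝ)
    (hβpos : ∀ i, 1 ≤ i → 0 < β i)
    (hβmono : ∀ i, 2 ≤ i → β i ≤ β (i - 1))
    (hθ0 : θ 0 = 1) (hθ1 : θ 1 = 1)
    (hθ : ∀ i, 2 ≤ i → θ i = 1 / γ + Real.sqrt (b + (θ (i - 1)) ^ 2))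
    (x w : ℤ → E)
    (hw : ∀ i, 1 ≤ i →
      w i = P (x (i - 1) + ((θ (i - 1) - 1) / θ i) • (x (i - 1) - x (i - 2))))
    (hprox : ∀ i, 1 ≤ i → ∀ z, R z ≥ R (x i) +
      ⟪z - x i, (β i)⁻¹ • (w i - β i • gradL (w i) - x i)⟫ - (εs i) ^ 2 / (2 * β i))
    (hmaj : ∀ i, 1 ≤ i → L (x i) ≤ L (w i) + ⟪x i - w i, gradL (w i)⟫
      + ‖x i - w i‖ ^ 2 / (2 * β i))
    (hxC : ∀ i, 0 ≤ i → x i ∈ C)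
    (xstar : E) (hxstarC : xstar ∈ C) (hmin : ∀ z, f xstar ≤ f z) :
    ∀ k : ℤ, 1 ≤ k →
      f (x k) - f xstar ≤
        γ ^ 2 * (‖x 0 - xstar‖ ^ 2 + ∑ i ∈ Finset.Icc 1 k, (θ i) ^ 2 * (εs i) ^ 2)
          / (2 * β k * ((k : ℝ) + 1) ^ 2) := by
  obtain rfl : f = L + R := funext hf
  intro k hk
  set Δ : ℤ → ℝ := fun i => (L + R) (x i) - (L + R) xstar with hΔ_def
  set u : ℤ → E := fun i => θ i • x i - (θ i - 1) • x (i - 1) - xstar with hu_def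
  have hΔ (i : ℤ) : 0 ≤ Δ i := sub_nonneg.2 (hmin _)
  have hθ_ge (i : ℤ) (hi : 1 ≤ i) := momentum_seq_bounds hγ hb0 hθ1 hθ hi
  have hstep (i : ℤ) (hi : 1 ≤ i) : 2 * β i * θ i ^ 2 * Δ i + ‖u i‖ ^ 2 ≤
      2 * β i * (θ i * (θ i - 1)) * Δ (i - 1) + ‖u (i - 1)‖ ^ 2 + θ i ^ 2 * εs i ^ 2 := by
    simpa only [hΔ_def, hu_def, show i - 1 - 1 = i - 2 by ring] using
      fista_step_lyapunov hLconv hLgrad hCconv hPmem hPproj (hβpos i hi) (hθ_ge i hi).1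
        (hxC _ (by omega)) hxstarC (hw i hi) (hprox i hi) (hmaj i hi)
  have hV := le_add_sum_Icc_of_le_add (V := fun i => 2 * β i * θ i ^ 2 * Δ i + ‖u i‖ ^ 2)
    (A := ‖x 0 - xstar‖ ^ 2) (c := fun i => θ i ^ 2 * εs i ^ 2) ?_ ?_ hk
  · refine le_sq_mul_div_of_mul_sq_mul_le (hΔ k) (hβpos k hk) (by positivity) (hθ_ge k hk).2 ?_
    exact le_of_add_le_of_nonneg_left hV (sq_nonneg _)
  · simpa [hu_def, hθ0, hθ1] using hstep 1 le_rfl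
  · intro i hi
    have hθθ := momentum_mul_sub_one_le_sq hγ hb0 hb1 (hθ_ge (i - 1) (by omega)).1
    rw [← hθ i hi] at hθθ
    have hθi := (hθ_ge i (by omega)).1
    have hβi := hβpos (i - 1) (by omega)
    have hβmono_i := hβmono i hi
    refine (hstep i (by omega)).trans ?_
    gcongr 2 * ?_ * ?_ * Δ _ + _ + _
    exact hΔ _

/-- FISTA-type bound: with a non-increasing step-size sequence and the
momentum update `θ_i = 1/γ + √(b + θ_{i−1}²)`, for every `k ≥ 1`,
`Δ_k ≤ γ² (‖x_0 − x⋆‖² + E_k)/(2 β_k (k+1)²)`. -/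
theorem fista_objective_rate {E : Type*} [NormedAddCommGroup E]
    [InnerProductSpace ℝ E] [FiniteDimensional ℝ E]
    (L R f : E → ℝ) (gradL : E → E)
    (hLconv : ConvexOn ℝ Set.univ L)
    (hLgrad : ∀ x, HasGradientAt L (gradL x) x)
    (hRconv : ConvexOn ℝ Set.univ R)
    (hf : ∀ x, f x = L x + R x)
    (C : Set E) (hCne : C.Nonempty) (hCcl : IsClosed C) (hCconv : Convex ℝ C)
    (P : E → E) (hPmem : ∀ z, P z ∈ C)
    (hPproj : ∀ z, ∀ y ∈ C, ‖z - P z‖ ≤ ‖z - y‖)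
    (γ b : ℝ) (hγ : 2 ≤ γ) (hb0 : 0 ≤ b) (hb1 : b ≤ 1 / 4)
    (β εs θ : ℤ → ℝ)
    (hβpos : ∀ i, 1 ≤ i → 0 < β i) (hεs : ∀ i, 1 ≤ i → 0 ≤ εs i)
    (hβmono : ∀ i, 2 ≤ i → β i ≤ β (i - 1))
    (hθ0 : θ 0 = 1) (hθ1 : θ 1 = 1)
    (hθ : ∀ i, 2 ≤ i → θ i = 1 / γ + Real.sqrt (b + (θ (i - 1)) ^ 2))
    (x w : ℤ → E)
    (hw : ∀ i, 1 ≤ i →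
      w i = P (x (i - 1) + ((θ (i - 1) - 1) / θ i) • (x (i - 1) - x (i - 2))))
    (hprox : ∀ i, 1 ≤ i → ∀ z, R z ≥ R (x i) +
      ⟪z - x i, (β i)⁻¹ • (w i - β i • gradL (w i) - x i)⟫ - (εs i) ^ 2 / (2 * β i))
    (hmaj : ∀ i, 1 ≤ i → L (x i) ≤ L (w i) + ⟪x i - w i, gradL (w i)⟫
      + ‖x i - w i‖ ^ 2 / (2 * β i))
    (hxC : ∀ i, 0 ≤ i → x i ∈ C)
    (xstar : E) (hxstarC : xstar ∈ C) (hmin : ∀ z, f xstar ≤ f z) :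
    ∀ k : ℤ, 1 ≤ k →
      f (x k) - f xstar ≤
        γ ^ 2 * (‖x 0 - xstar‖ ^ 2 + ∑ i ∈ Finset.Icc 1 k, (θ i) ^ 2 * (εs i) ^ 2)
          / (2 * β k * ((k : ℝ) + 1) ^ 2) :=
  fista_objective_rate_general L R f gradL hLconv hLgrad hf C hCconv P hPmem hPproj γ b hγ hb0 hb1 β
    εs θ hβpos hβmono hθ0 hθ1 hθ x w hw hprox hmaj hxC xstar hxstarC hmin
end

section
/- Suppose additionally that γ > 2, that b ∈ [0, 1/γ²], and that the series Σ_{i=1}^{∞} θ_i²·ε_i² converges. Then the series Σ_{i=1}^{∞} (2θ_i − 1)·δ_i converges; that is, the nonnegative sequence ((2θ_i − 1)·‖x_i − x_{i−1}‖²)_{i≥1} is summable. -/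
/-!
Every inexact proximal-gradient step gives, for all `z`,
`2 β_i (f x_i - f z) ≤ ‖w̄_i - z‖² - ‖x_i - z‖² + ε_i²`.
Taking `z = x_{i-1}` and `z = x⋆` with weights `θ_i (θ_i - 1)` and `θ_i`, bounding the momentum
term through the projection (which cannot increase distances to points of `C`), and using
`β_i θ_i² ≤ β_{i-1} θ_{i-1}² + (2/γ) β_i θ_i` (this is where `b ≤ 1/γ²` enters) shows that
`2 β_i θ_i² (f x_i - f x⋆) + ‖θ_i x_i - (θ_i - 1) x_{i-1} - x⋆‖²` decreases up to the summable
errors `θ_i² ε_i²` by at least `(1 - 2/γ) · 2 β_i θ_i (f x_{i-1} - f x⋆)`; as `γ > 2` these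
decrements are summable. The instance `z = x_{i-1}` alone shows that
`θ_i² δ_i + 2 β_i θ_i² (f x_i - f x⋆)` decreases by `(2 θ_{i-1} - 1) δ_{i-1}`, since
`θ² - (θ - 1)² = 2θ - 1`, up to errors that are now known to be summable.
-/

open RealInnerProductSpace Finset

section

variable {E : Type*} [NormedAddCommGroup E] [InnerProductSpace ℝ E]

theorem ConvexOn.add_inner_sub_le_of_hasGradientAt [CompleteSpace E] {L : E → ℝ}
    (hL : ConvexOn ℝ Set.univ L) {g a : E} (hg : HasGradientAt L g a) (y : E) :
    L a + ⟪y - a, g⟫ ≤ L y := by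
  let ℓ : ℝ →ᵃ[ℝ] E := AffineMap.lineMap a y
  have hline : HasDerivAt (L ∘ ℓ) ⟪g, y - a⟫ 0 := by
    have hℓ : HasDerivAt ℓ (y - a) 0 := AffineMap.hasDerivAt_lineMap
    simpa using (hasGradientAt_iff_hasFDerivAt.mp (by simpa [ℓ] using hg)).comp_hasDerivAt 0 hℓ
  have hslope := (hL.comp_affineMap ℓ).le_slope_of_hasDerivAt
    (Set.mem_univ 0) (Set.mem_univ 1) one_pos hline
  simp only [ℓ, Function.comp_apply, slope_def_field, AffineMap.lineMap_apply_zero,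
    AffineMap.lineMap_apply_one, sub_zero, div_one] at hslope
  rw [real_inner_comm]
  linarith

theorem Convex.norm_nearest_sub_le {C : Set E} (hC : Convex ℝ C) {z p c : E} (hp : p ∈ C)
    (hmin : ∀ y ∈ C, ‖z - p‖ ≤ ‖z - y‖) (hc : c ∈ C) : ‖p - c‖ ≤ ‖z - c‖ := by
  have : Nonempty C := ⟨⟨p, hp⟩⟩
  have hinf : ‖z - p‖ = ⨅ y : C, ‖z - y‖ :=
    le_antisymm (le_ciInf fun y => hmin y y.2)
      (ciInf_le (f := fun y : C => ‖z - y‖) ⟨0, Set.forall_mem_range.2 fun _ => norm_nonneg _⟩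
        ⟨p, hp⟩)
  have hobtuse := (norm_eq_iInf_iff_real_inner_le_zero hC hp).mp hinf c hc
  have hsplit : ‖z - c‖ ^ 2 = ‖z - p‖ ^ 2 - 2 * ⟪z - p, c - p⟫ + ‖p - c‖ ^ 2 := by
    rw [← norm_sub_rev c p, show z - c = (z - p) - (c - p) by abel, norm_sub_sq_real]
  exact (pow_le_pow_iff_left₀ (norm_nonneg _) (norm_nonneg _) two_ne_zero).mp
    (by nlinarith [sq_nonneg ‖z - p‖])

theorem norm_smul_sub_smul_sub_sq (t : ℝ) (a b c : E) :
    ‖t • a - (t - 1) • b - c‖ ^ 2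
      = t * ‖a - c‖ ^ 2 - (t - 1) * ‖b - c‖ ^ 2 + t * (t - 1) * ‖a - b‖ ^ 2 := by
  rw [show t • a - (t - 1) • b - c = t • (a - c) - (t - 1) • (b - c) by module,
    show a - b = (a - c) - (b - c) by abel]
  generalize a - c = p
  generalize b - c = q
  rw [norm_sub_sq_real, norm_sub_sq_real, norm_smul, norm_smul, real_inner_smul_left,
    real_inner_smul_right, mul_pow, mul_pow, Real.norm_eq_abs, Real.norm_eq_abs, sq_abs, sq_abs]
  ring

theorem inexact_proxGrad_descent [CompleteSpace E] {L R : E → ℝ} {g w x : E} {β ε : ℝ}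
    (hL : ConvexOn ℝ Set.univ L) (hg : HasGradientAt L g w) (hβ : 0 < β)
    (hprox : ∀ z, R z ≥ R x + ⟪z - x, β⁻¹ • (w - β • g - x)⟫ - ε ^ 2 / (2 * β))
    (hmaj : L x ≤ L w + ⟪x - w, g⟫ + ‖x - w‖ ^ 2 / (2 * β)) (z : E) :
    2 * β * (L x + R x - (L z + R z)) ≤ ‖w - z‖ ^ 2 - ‖x - z‖ ^ 2 + ε ^ 2 := by
  have htangent := hL.add_inner_sub_le_of_hasGradientAt hg z
  have hsubgrad := hprox z
  rw [show w - β • g - x = (w - x) - β • g by abel, smul_sub, smul_smul, inv_mul_cancel₀ hβ.ne',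
    one_smul, inner_sub_right, real_inner_smul_right] at hsubgrad
  have hgrad : ⟪x - w, g⟫ - ⟪z - w, g⟫ + ⟪z - x, g⟫ = 0 := by
    rw [← inner_sub_left, ← inner_add_left]; simp
  have hsplit : (‖w - z‖ ^ 2 - ‖x - z‖ ^ 2 + ε ^ 2) / (2 * β)
      = ‖x - w‖ ^ 2 / (2 * β) - β⁻¹ * ⟪z - x, w - x⟫ + ε ^ 2 / (2 * β) := by
    rw [show w - z = (w - x) - (z - x) by abel, norm_sub_sq_real, norm_sub_rev w x,
      norm_sub_rev z x, real_inner_comm]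
    field_simp
    ring
  rw [← le_div_iff₀' (by positivity), hsplit]
  linarith

theorem momentum_descent {F : E → ℝ} {w x x' xs : E} {β θ ε : ℝ}
    (hdesc : ∀ z, 2 * β * (F x - F z) ≤ ‖w - z‖ ^ 2 - ‖x - z‖ ^ 2 + ε ^ 2) (hθ : 1 ≤ θ) :
    2 * β * θ ^ 2 * (F x - F xs) - 2 * β * θ * (θ - 1) * (F x' - F xs)
      ≤ ‖θ • w - (θ - 1) • x' - xs‖ ^ 2 - ‖θ • x - (θ - 1) • x' - xs‖ ^ 2 + θ ^ 2 * ε ^ 2 := by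
  rw [norm_smul_sub_smul_sub_sq, norm_smul_sub_smul_sub_sq]
  have h1 := mul_le_mul_of_nonneg_left (hdesc x') (by nlinarith : 0 ≤ θ * (θ - 1))
  have h2 := mul_le_mul_of_nonneg_left (hdesc xs) (by linarith : 0 ≤ θ)
  linarith

theorem Convex.norm_momentum_nearest_le {C : Set E} (hC : Convex ℝ C) {p x' x'' c : E}
    {θ θ' : ℝ} (hp : p ∈ C)
    (hmin : ∀ q ∈ C, ‖x' + ((θ' - 1) / θ) • (x' - x'') - p‖
      ≤ ‖x' + ((θ' - 1) / θ) • (x' - x'') - q‖)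
    (hx' : x' ∈ C) (hc : c ∈ C) (hθ : 1 ≤ θ) :
    ‖θ • p - (θ - 1) • x' - c‖ ≤ ‖θ' • x' - (θ' - 1) • x'' - c‖ := by
  have hθ0 : 0 < θ := by linarith
  set q := (1 - θ⁻¹) • x' + θ⁻¹ • c
  have hq : q ∈ C := hC hx' hc (sub_nonneg.2 (inv_le_one_of_one_le₀ hθ)) (by positivity) (by ring)
  have hpq : θ • p - (θ - 1) • x' - c = θ • (p - q) := by
    simp only [q]; match_scalars <;> field_simp
  have hyq : θ' • x' - (θ' - 1) • x'' - c = θ • (x' + ((θ' - 1) / θ) • (x' - x'') - q) := by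
    simp only [q]; match_scalars <;> field_simp; ring
  rw [hpq, hyq, norm_smul, norm_smul]
  exact mul_le_mul_of_nonneg_left (hC.norm_nearest_sub_le hp hmin hq) (norm_nonneg _)

theorem mul_sq_le_of_eq_add_sqrt {β β' θ θ' γ b : ℝ} (hβ : 0 < β) (hβ' : 0 ≤ β') (hb : 0 ≤ b)
    (hbγ : b ≤ 1 / γ ^ 2) (hθ : θ = 1 / γ + √(b + β' / β * θ' ^ 2)) :
    β * θ ^ 2 ≤ β' * θ' ^ 2 + 2 / γ * (β * θ) := by
  have hsq : (θ - 1 / γ) ^ 2 = b + β' / β * θ' ^ 2 := by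
    rw [hθ, add_sub_cancel_left, Real.sq_sqrt (by positivity)]
  have hexpand : β * θ ^ 2 = β * b + β' * θ' ^ 2 + 2 / γ * (β * θ) - β * (1 / γ ^ 2) := by
    rw [show θ ^ 2 = (θ - 1 / γ) ^ 2 + 2 / γ * θ - 1 / γ ^ 2 by ring, hsq]
    field_simp
  nlinarith [mul_le_mul_of_nonneg_left hbγ hβ.le]

theorem pnpg_energy_step {F : E → ℝ} {w x x' x'' xs : E} {β β' θ θ' ε γ : ℝ}
    (hdesc : ∀ z, 2 * β * (F x - F z) ≤ ‖w - z‖ ^ 2 - ‖x - z‖ ^ 2 + ε ^ 2) (hθ : 1 ≤ θ)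
    (hrec : β * θ ^ 2 ≤ β' * θ' ^ 2 + 2 / γ * (β * θ)) (hxs : F xs ≤ F x')
    (hmom : ‖θ • w - (θ - 1) • x' - xs‖ ≤ ‖θ' • x' - (θ' - 1) • x'' - xs‖) :
    2 * β * θ ^ 2 * (F x - F xs) + ‖θ • x - (θ - 1) • x' - xs‖ ^ 2
        + (1 - 2 / γ) * (2 * β * θ * (F x' - F xs))
      ≤ 2 * β' * θ' ^ 2 * (F x' - F xs) + ‖θ' • x' - (θ' - 1) • x'' - xs‖ ^ 2
        + θ ^ 2 * ε ^ 2 := by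
  have hdesc' := momentum_descent (x' := x') (xs := xs) hdesc hθ
  have hmom' := pow_le_pow_left₀ (norm_nonneg _) hmom 2
  have hrec' := mul_le_mul_of_nonneg_right hrec (sub_nonneg.2 hxs)
  nlinarith

theorem pnpg_delta_step {F : E → ℝ} {w x x' x'' xs : E} {β β' θ θ' ε γ : ℝ}
    (hdesc : ∀ z, 2 * β * (F x - F z) ≤ ‖w - z‖ ^ 2 - ‖x - z‖ ^ 2 + ε ^ 2)
    (hrec : β * θ ^ 2 ≤ β' * θ' ^ 2 + 2 / γ * (β * θ)) (hxs : F xs ≤ F x')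
    (hmom : ‖θ • w - (θ - 1) • x' - x'‖ ≤ ‖θ' • x' - (θ' - 1) • x'' - x'‖) :
    θ ^ 2 * ‖x - x'‖ ^ 2 + 2 * β * θ ^ 2 * (F x - F xs) + (2 * θ' - 1) * ‖x' - x''‖ ^ 2
      ≤ θ' ^ 2 * ‖x' - x''‖ ^ 2 + 2 * β' * θ' ^ 2 * (F x' - F xs)
        + 2 / γ * (2 * β * θ * (F x' - F xs)) + θ ^ 2 * ε ^ 2 := by
  rw [show θ • w - (θ - 1) • x' - x' = θ • (w - x') by module,
    show θ' • x' - (θ' - 1) • x'' - x' = (θ' - 1) • (x' - x'') by module] at hmom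
  have hmom' := pow_le_pow_left₀ (norm_nonneg _) hmom 2
  rw [norm_smul, norm_smul, mul_pow, mul_pow, Real.norm_eq_abs, Real.norm_eq_abs, sq_abs,
    sq_abs] at hmom'
  have hdesc' := mul_le_mul_of_nonneg_left (hdesc x') (sq_nonneg θ)
  have hrec' := mul_le_mul_of_nonneg_right hrec (sub_nonneg.2 hxs)
  nlinarith

theorem summable_of_succ_add_le {u s r : ℕ → ℝ} (hu : ∀ n, 0 ≤ u n) (hs : ∀ n, 0 ≤ s n)
    (hr : Summable r) (hr0 : ∀ n, 0 ≤ r n) (h : ∀ n, u (n + 1) + s n ≤ u n + r n) :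
    Summable s := by
  refine summable_of_sum_range_le hs (c := u 0 + ∑' n, r n) fun N => ?_
  have hsum : ∑ k ∈ range N, s k ≤ ∑ k ∈ range N, (u k - u (k + 1) + r k) :=
    sum_le_sum fun k _ => by linarith [h k]
  rw [sum_add_distrib, sum_range_sub'] at hsum
  linarith [hu N, hr.sum_le_tsum (range N) fun k _ => hr0 k]

theorem pnpg_summable_of_steps {F : E → ℝ} {C : Set E} {xs : E} {x w : ℕ → E}
    {β θ ε : ℕ → ℝ} {γ : ℝ} (hγ : 2 < γ) (hβ : ∀ n, 0 < β (n + 1)) (hθ : ∀ n, 1 ≤ θ (n + 1))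
    (hgap : ∀ n, F xs ≤ F (x n)) (herr : Summable fun n => θ (n + 1) ^ 2 * ε (n + 1) ^ 2)
    (hxs : xs ∈ C) (hxC : ∀ n, x n ∈ C)
    (hdesc : ∀ n z, 2 * β (n + 2) * (F (x (n + 2)) - F z)
      ≤ ‖w (n + 2) - z‖ ^ 2 - ‖x (n + 2) - z‖ ^ 2 + ε (n + 2) ^ 2)
    (hrec : ∀ n, β (n + 2) * θ (n + 2) ^ 2
      ≤ β (n + 1) * θ (n + 1) ^ 2 + 2 / γ * (β (n + 2) * θ (n + 2)))
    (hmom : ∀ n, ∀ c ∈ C, ‖θ (n + 2) • w (n + 2) - (θ (n + 2) - 1) • x (n + 1) - c‖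
      ≤ ‖θ (n + 1) • x (n + 1) - (θ (n + 1) - 1) • x n - c‖) :
    Summable fun n => (2 * θ (n + 1) - 1) * ‖x (n + 1) - x n‖ ^ 2 := by
  have hgap' n : 0 ≤ F (x n) - F xs := sub_nonneg.2 (hgap n)
  have herr' : Summable fun n => θ (n + 2) ^ 2 * ε (n + 2) ^ 2 := (summable_nat_add_iff 1).mpr herr
  have hdecr : Summable fun n => 2 * β (n + 2) * θ (n + 2) * (F (x (n + 1)) - F xs) := by
    have hc : (0 : ℝ) < 1 - 2 / γ := by rw [sub_pos, div_lt_one (by linarith)]; exact hγ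
    refine (summable_mul_left_iff hc.ne').mp (summable_of_succ_add_le
      (u := fun n => 2 * β (n + 1) * θ (n + 1) ^ 2 * (F (x (n + 1)) - F xs)
        + ‖θ (n + 1) • x (n + 1) - (θ (n + 1) - 1) • x n - xs‖ ^ 2)
      (fun n => ?_) (fun n => ?_) herr' (fun n => by positivity)
      (fun n => pnpg_energy_step (hdesc n) (hθ _) (hrec n) (hgap _) (hmom n xs hxs)))
    · have := hβ n; have := hgap' (n + 1); positivity
    · have := hβ (n + 1); have := hθ (n + 1); have := hgap' (n + 1); positivity
  refine summable_of_succ_add_le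
    (u := fun n => θ (n + 1) ^ 2 * ‖x (n + 1) - x n‖ ^ 2
      + 2 * β (n + 1) * θ (n + 1) ^ 2 * (F (x (n + 1)) - F xs))
    (fun n => ?_) (fun n => ?_) ((hdecr.mul_left (2 / γ)).add herr') (fun n => ?_)
    (fun n => (pnpg_delta_step (hdesc n) (hrec n) (hgap _) (hmom n _ (hxC _))).trans_eq
      (add_assoc _ _ _))
  · have := hβ n; have := hgap' (n + 1); positivity
  · exact mul_nonneg (by linarith [hθ n]) (sq_nonneg _)
  · have := hβ (n + 1); have := hθ (n + 1); have := hgap' (n + 1)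
    have : (0 : ℝ) < γ := by linarith
    positivity

end

theorem pnpg_delta_summable_general {E : Type*} [NormedAddCommGroup E]
    [InnerProductSpace ℝ E] [FiniteDimensional ℝ E]
    (L R f : E → ℝ) (gradL : E → E)
    (hLconv : ConvexOn ℝ Set.univ L)
    (hLgrad : ∀ x, HasGradientAt L (gradL x) x)
    (hf : ∀ x, f x = L x + R x)
    (C : Set E) (hCconv : Convex ℝ C)
    (P : E → E) (hPmem : ∀ z, P z ∈ C)
    (hPproj : ∀ z, ∀ y ∈ C, ‖z - P z‖ ≤ ‖z - y‖)
    (γ b : ℝ) (hb0 : 0 ≤ b)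
    (β εs θ : ℤ → ℝ)
    (hβpos : ∀ i, 1 ≤ i → 0 < β i)
    (hθ : ∀ i, 2 ≤ i → θ i = 1 / γ + Real.sqrt (b + (β (i - 1) / β i) * (θ (i - 1)) ^ 2))
    (hθge1 : ∀ i, 1 ≤ i → 1 ≤ θ i)
    (x w : ℤ → E)
    (hw : ∀ i, 1 ≤ i →
      w i = P (x (i - 1) + ((θ (i - 1) - 1) / θ i) • (x (i - 1) - x (i - 2))))
    (hprox : ∀ i, 1 ≤ i → ∀ z, R z ≥ R (x i) +
      ⟪z - x i, (β i)⁻¹ • (w i - β i • gradL (w i) - x i)⟫ - (εs i) ^ 2 / (2 * β i))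
    (hmaj : ∀ i, 1 ≤ i → L (x i) ≤ L (w i) + ⟪x i - w i, gradL (w i)⟫
      + ‖x i - w i‖ ^ 2 / (2 * β i))
    (hxC : ∀ i, 0 ≤ i → x i ∈ C)
    (xstar : E) (hxstarC : xstar ∈ C) (hmin : ∀ z, f xstar ≤ f z)
    (hγ2 : 2 < γ) (hbγ : b ≤ 1 / γ ^ 2)
    (hE : Summable (fun n : ℕ => (θ ((n : ℤ) + 1)) ^ 2 * (εs ((n : ℤ) + 1)) ^ 2)) :
    Summable (fun n : ℕ =>
      (2 * θ ((n : ℤ) + 1) - 1) * ‖x ((n : ℤ) + 1) - x (n : ℤ)‖ ^ 2) := by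
  have hidx (n : ℕ) : ((n + 2 : ℕ) : ℤ) - 1 = (n + 1 : ℕ) ∧ ((n + 2 : ℕ) : ℤ) - 2 = n := by omega
  have hdesc (n : ℕ) (z : E) : 2 * β (n + 2 : ℕ) * (f (x (n + 2 : ℕ)) - f z)
      ≤ ‖w (n + 2 : ℕ) - z‖ ^ 2 - ‖x (n + 2 : ℕ) - z‖ ^ 2 + εs (n + 2 : ℕ) ^ 2 := by
    simpa only [hf] using inexact_proxGrad_descent hLconv (hLgrad _) (hβpos _ (by omega))
      (hprox _ (by omega)) (hmaj _ (by omega)) z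
  have hrec (n : ℕ) : β (n + 2 : ℕ) * θ (n + 2 : ℕ) ^ 2
      ≤ β (n + 1 : ℕ) * θ (n + 1 : ℕ) ^ 2 + 2 / γ * (β (n + 2 : ℕ) * θ (n + 2 : ℕ)) := by
    have hθn := hθ (n + 2 : ℕ) (by omega)
    rw [(hidx n).1] at hθn
    exact mul_sq_le_of_eq_add_sqrt (hβpos _ (by omega)) (hβpos _ (by omega)).le hb0 hbγ hθn
  have hmom (n : ℕ) (c : E) (hc : c ∈ C) :
      ‖θ (n + 2 : ℕ) • w (n + 2 : ℕ) - (θ (n + 2 : ℕ) - 1) • x (n + 1 : ℕ) - c‖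
        ≤ ‖θ (n + 1 : ℕ) • x (n + 1 : ℕ) - (θ (n + 1 : ℕ) - 1) • x n - c‖ := by
    have hwn := hw (n + 2 : ℕ) (by omega)
    rw [(hidx n).1, (hidx n).2] at hwn
    exact hwn ▸ hCconv.norm_momentum_nearest_le (hPmem _) (hPproj _) (hxC _ (by omega)) hc
      (hθge1 _ (by omega))
  simpa only [Nat.cast_succ] using pnpg_summable_of_steps (F := f) (x := fun n : ℕ => x n)
    (w := fun n : ℕ => w n) (β := fun n : ℕ => β n) (θ := fun n : ℕ => θ n)
    (ε := fun n : ℕ => εs n) hγ2 (fun n => hβpos _ (by omega)) (fun n => hθge1 _ (by omega))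
    (fun n => hmin _) (by simpa only [Nat.cast_succ] using hE) hxstarC (fun n => hxC _ (by omega))
    hdesc hrec hmom

/-- Lemma 3: If moreover `γ > 2`, `b ∈ [0, 1/γ²]`, and
`Σ_{i≥1} θ_i² ε_i² < ∞`, then `Σ_{i≥1} (2θ_i − 1) δ_i < ∞`, where
`δ_i = ‖x_i − x_{i−1}‖²`. -/
theorem pnpg_delta_summable {E : Type*} [NormedAddCommGroup E]
    [InnerProductSpace ℝ E] [FiniteDimensional ℝ E]
    (L R f : E → ℝ) (gradL : E → E)
    (hLconv : ConvexOn ℝ Set.univ L)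
    (hLgrad : ∀ x, HasGradientAt L (gradL x) x)
    (hRconv : ConvexOn ℝ Set.univ R)
    (hf : ∀ x, f x = L x + R x)
    (C : Set E) (hCne : C.Nonempty) (hCcl : IsClosed C) (hCconv : Convex ℝ C)
    (P : E → E) (hPmem : ∀ z, P z ∈ C)
    (hPproj : ∀ z, ∀ y ∈ C, ‖z - P z‖ ≤ ‖z - y‖)
    (γ b : ℝ) (hγ : 2 ≤ γ) (hb0 : 0 ≤ b) (hb1 : b ≤ 1 / 4)
    (β εs θ : ℤ → ℝ)
    (hβpos : ∀ i, 1 ≤ i → 0 < β i) (hεs : ∀ i, 1 ≤ i → 0 ≤ εs i)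
    (hθ0 : θ 0 = 1) (hθ1 : θ 1 = 1)
    (hθ : ∀ i, 2 ≤ i → θ i = 1 / γ + Real.sqrt (b + (β (i - 1) / β i) * (θ (i - 1)) ^ 2))
    (hθge1 : ∀ i, 1 ≤ i → 1 ≤ θ i)
    (x w : ℤ → E)
    (hw : ∀ i, 1 ≤ i →
      w i = P (x (i - 1) + ((θ (i - 1) - 1) / θ i) • (x (i - 1) - x (i - 2))))
    (hprox : ∀ i, 1 ≤ i → ∀ z, R z ≥ R (x i) +
      ⟪z - x i, (β i)⁻¹ • (w i - β i • gradL (w i) - x i)⟫ - (εs i) ^ 2 / (2 * β i))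
    (hmaj : ∀ i, 1 ≤ i → L (x i) ≤ L (w i) + ⟪x i - w i, gradL (w i)⟫
      + ‖x i - w i‖ ^ 2 / (2 * β i))
    (hxC : ∀ i, 0 ≤ i → x i ∈ C)
    (xstar : E) (hxstarC : xstar ∈ C) (hmin : ∀ z, f xstar ≤ f z)
    (hγ2 : 2 < γ) (hbγ : b ≤ 1 / γ ^ 2)
    (hE : Summable (fun n : ℕ => (θ ((n : ℤ) + 1)) ^ 2 * (εs ((n : ℤ) + 1)) ^ 2)) :
    Summable (fun n : ℕ =>
      (2 * θ ((n : ℤ) + 1) - 1) * ‖x ((n : ℤ) + 1) - x (n : ℤ)‖ ^ 2) :=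
  pnpg_delta_summable_general L R f gradL hLconv hLgrad hf C hCconv P hPmem hPproj γ b hb0 β εs θ
    hβpos hθ hθge1 x w hw hprox hmaj hxC xstar hxstarC hmin hγ2 hbγ hE
end

section
/- Let γ > 0, b ≥ 0, β > 0, β⁺ > 0, and θ ∈ ℝ, and define θ⁺ = 1/γ + √(b + (β/β⁺)·θ²). Then β·θ² − β⁺·θ⁺·(θ⁺ − 1) = (β⁺/γ)·[(γ − 2)·θ⁺ + (1 − b·γ²)/γ]. In particular, if γ ≥ 2 and b·γ² ≤ 1, then β·θ² − β⁺·θ⁺·(θ⁺ − 1) ≥ ((γ − 2)/γ)·β⁺·θ⁺. -/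
/-- For `θ⁺ = 1/γ + √(b + (β/β⁺) θ²)`, the momentum gap satisfies
`β θ² − β⁺ θ⁺ (θ⁺ − 1) = (β⁺/γ)((γ − 2) θ⁺ + (1 − b γ²)/γ)`; in particular, if
`γ ≥ 2` and `b γ² ≤ 1`, then `β θ² − β⁺ θ⁺ (θ⁺ − 1) ≥ ((γ − 2)/γ) β⁺ θ⁺`. -/
theorem momentum_gap_identity (γ b β βp θ θp : ℝ)
    (hγ : 0 < γ) (hb : 0 ≤ b) (hβ : 0 < β) (hβp : 0 < βp)
    (hθp : θp = 1 / γ + Real.sqrt (b + (β / βp) * θ ^ 2)) :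
    β * θ ^ 2 - βp * θp * (θp - 1) =
        (βp / γ) * ((γ - 2) * θp + (1 - b * γ ^ 2) / γ) ∧
      (2 ≤ γ → b * γ ^ 2 ≤ 1 →
        β * θ ^ 2 - βp * θp * (θp - 1) ≥ ((γ - 2) / γ) * βp * θp) := by
  set s := Real.sqrt (b + (β / βp) * θ ^ 2) with hs
  have hnn : 0 ≤ b + (β / βp) * θ ^ 2 := by positivity
  have hs2 : s ^ 2 = b + (β / βp) * θ ^ 2 := Real.sq_sqrt hnn
  have hsnn : 0 ≤ s := Real.sqrt_nonneg _
  have hβθ : β * θ ^ 2 = βp * (s ^ 2 - b) := by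
    rw [hs2]; field_simp; ring
  have hid : β * θ ^ 2 - βp * θp * (θp - 1) =
      (βp / γ) * ((γ - 2) * θp + (1 - b * γ ^ 2) / γ) := by
    rw [hβθ, hθp]; field_simp; ring
  refine ⟨hid, fun h2 hbγ => ?_⟩
  rw [hid]
  have hθpnn : 0 ≤ θp := by
    rw [hθp]; positivity
  have : ((γ - 2) / γ) * βp * θp = (βp / γ) * ((γ - 2) * θp) := by ring
  rw [this]
  have h1 : 0 ≤ (1 - b * γ ^ 2) / γ := by
    apply div_nonneg (by linarith) hγ.le
  have := div_pos hβp hγ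
  nlinarith
end

section
/- Define Θ_ℓ = (θ_{ℓ−1} − 1)/θ_ℓ for ℓ ≥ 2. Then for every j ≥ 3 and every K ≥ j, the partial sum of products satisfies Σ_{k=j}^{K} ∏_{ℓ=j}^{k} Θ_ℓ ≤ γ·θ_{j−1} − 1. -/
/-!
Write `S j K = ∑_{k ∈ (j, K]} ∏_{l ∈ (j, k]} Θ l`. Factoring out the first factor gives
`S j K = Θ (j+1) * (1 + S (j+1) K)`, and the definition of `Θ` makes `Θ (j+1) * θ (j+1)`
telescope to `θ j - 1`. So if `1 + S (j+1) K ≤ γ θ (j+1)` then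
`S j K ≤ γ (θ j - 1) ≤ γ θ j - 1`, and downward induction on `j` from the empty sum `S K K = 0`
gives the bound.
-/

open Finset

theorem prod_Ioc_eq_mul_prod_Ioc_succ {M : Type*} [CommMonoid M] (f : ℕ → M) {j k : ℕ}
    (h : j < k) : ∏ l ∈ Ioc j k, f l = f (j + 1) * ∏ l ∈ Ioc (j + 1) k, f l := by
  rw [← Icc_add_one_left_eq_Ioc, Icc_eq_cons_Ioc h, prod_cons]

theorem sum_Ioc_prod_Ioc_eq_mul {R : Type*} [CommSemiring R] (f : ℕ → R) {j K : ℕ} (h : j < K) :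
    ∑ k ∈ Ioc j K, ∏ l ∈ Ioc j k, f l =
      f (j + 1) * (1 + ∑ k ∈ Ioc (j + 1) K, ∏ l ∈ Ioc (j + 1) k, f l) := by
  rw [← Icc_add_one_left_eq_Ioc j K, Icc_eq_cons_Ioc h, sum_cons,
    Nat.Ioc_succ_singleton, prod_singleton, mul_add, mul_one, mul_sum]
  congr 1
  refine sum_congr rfl fun k hk => prod_Ioc_eq_mul_prod_Ioc_succ f ?_
  exact (Nat.lt_succ_self j).trans (mem_Ioc.1 hk).1

theorem sum_Ioc_prod_Ioc_le {γ : ℝ} (hγ : 1 ≤ γ) {θ Θ : ℕ → ℝ} {j : ℕ}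
    (hθ : ∀ i, j ≤ i → 1 ≤ θ i) (hΘ : ∀ l, j ≤ l → Θ (l + 1) = (θ l - 1) / θ (l + 1))
    (K : ℕ) : ∑ k ∈ Ioc j K, ∏ l ∈ Ioc j k, Θ l ≤ γ * θ j - 1 := by
  induction hn : K - j generalizing j with
  | zero =>
    rw [Ioc_eq_empty (by omega), sum_empty, sub_nonneg]
    exact one_le_mul_of_one_le_of_one_le hγ (hθ j le_rfl)
  | succ n ih =>
    have hθj : 1 ≤ θ j := hθ j le_rfl
    have hθj1 : 1 ≤ θ (j + 1) := hθ (j + 1) j.le_succ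
    have hrest : 1 + ∑ k ∈ Ioc (j + 1) K, ∏ l ∈ Ioc (j + 1) k, Θ l ≤ γ * θ (j + 1) := by
      linarith [ih (j := j + 1) (fun i hi => hθ i (by omega)) (fun l hl => hΘ l (by omega)) (by omega)]
    have hΘnonneg : 0 ≤ Θ (j + 1) := by
      rw [hΘ j le_rfl]
      exact div_nonneg (by linarith) (by linarith)
    rw [sum_Ioc_prod_Ioc_eq_mul Θ (by omega)]
    calc Θ (j + 1) * (1 + ∑ k ∈ Ioc (j + 1) K, ∏ l ∈ Ioc (j + 1) k, Θ l)
        ≤ Θ (j + 1) * (γ * θ (j + 1)) := mul_le_mul_of_nonneg_left hrest hΘnonneg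
      _ = γ * (θ j - 1) := by
        rw [hΘ j le_rfl]
        field_simp
      _ ≤ γ * θ j - 1 := by linarith

theorem momentum_product_sum_bound_general (γ : ℝ) (hγ : 2 ≤ γ)
    (θ : ℕ → ℝ)
    (hθge1 : ∀ i, 1 ≤ i → 1 ≤ θ i)
    (Θ : ℕ → ℝ) (hΘ : ∀ l, 2 ≤ l → Θ l = (θ (l - 1) - 1) / θ l) :
    ∀ j K : ℕ, 3 ≤ j → j ≤ K →
      ∑ k ∈ Finset.Icc j K, ∏ l ∈ Finset.Icc j k, Θ l ≤ γ * θ (j - 1) - 1 := by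
  intro j K hj _
  obtain ⟨m, rfl⟩ : ∃ m, j = m + 1 := ⟨j - 1, by omega⟩
  simp only [Icc_add_one_left_eq_Ioc, Nat.add_sub_cancel]
  refine sum_Ioc_prod_Ioc_le (by linarith) (fun i hi => hθge1 i (by omega)) (fun l hl => ?_) K
  simpa using hΘ (l + 1) (by omega)

/-- Lemma 4: With `Θ_ℓ = (θ_{ℓ−1} − 1)/θ_ℓ`, for every `j ≥ 3` and
`K ≥ j`, `Σ_{k=j}^{K} Π_{ℓ=j}^{k} Θ_ℓ ≤ γ θ_{j−1} − 1`. -/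
theorem momentum_product_sum_bound (γ b : ℝ) (hγ : 2 ≤ γ) (hb0 : 0 ≤ b) (hb1 : b ≤ 1 / 4)
    (β θ : ℕ → ℝ) (hβ : ∀ i, 1 ≤ i → 0 < β i)
    (hθ1 : θ 1 = 1)
    (hθ : ∀ i, 2 ≤ i → θ i = 1 / γ + Real.sqrt (b + (β (i - 1) / β i) * (θ (i - 1)) ^ 2))
    (hθge1 : ∀ i, 1 ≤ i → 1 ≤ θ i)
    (Θ : ℕ → ℝ) (hΘ : ∀ l, 2 ≤ l → Θ l = (θ (l - 1) - 1) / θ l) :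
    ∀ j K : ℕ, 3 ≤ j → j ≤ K →
      ∑ k ∈ Finset.Icc j K, ∏ l ∈ Finset.Icc j k, Θ l ≤ γ * θ (j - 1) - 1 :=
  momentum_product_sum_bound_general γ hγ θ hθge1 Θ hΘ
end

section
/- Suppose additionally that there are constants 0 < β_min ≤ β_max with β_min ≤ β_i ≤ β_max for all i ≥ 1. Then for every k ≥ 1 one has θ_k ≥ (1 + (k − 1)/γ)·√(β_min/β_max); in particular, θ_k → ∞ as k → ∞. -/
/-- If in addition `0 < β_min ≤ β_i ≤ β_max` for all `i ≥ 1`, then for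
every `k ≥ 1`, `θ_k ≥ (1 + (k−1)/γ) √(β_min/β_max)`; in particular `θ_k → ∞`. -/
theorem momentum_tendsto_atTop (γ b : ℝ) (hγ : 2 ≤ γ) (hb0 : 0 ≤ b) (hb1 : b ≤ 1 / 4)
    (β θ : ℕ → ℝ) (hβ : ∀ i, 1 ≤ i → 0 < β i)
    (hθ1 : θ 1 = 1)
    (hθ : ∀ i, 2 ≤ i → θ i = 1 / γ + Real.sqrt (b + (β (i - 1) / β i) * (θ (i - 1)) ^ 2))
    (βmin βmax : ℝ) (hβmin : 0 < βmin) (hminmax : βmin ≤ βmax)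
    (hβrange : ∀ i, 1 ≤ i → βmin ≤ β i ∧ β i ≤ βmax) :
    (∀ k, 1 ≤ k →
        θ k ≥ (1 + ((k : ℝ) - 1) / γ) * Real.sqrt (βmin / βmax)) ∧
      Filter.Tendsto θ Filter.atTop Filter.atTop := by
  have hγ0 : (0:ℝ) < γ := lt_of_lt_of_le two_pos hγ
  have hβmax : (0:ℝ) < βmax := lt_of_lt_of_le hβmin hminmax
  have hsm : (0:ℝ) < Real.sqrt βmin := Real.sqrt_pos.mpr hβmin
  -- strengthened induction: √(β k) * θ k ≥ √βmin * (1 + (k-1)/γ)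
  have main2 : ∀ k : ℕ, 1 ≤ k →
      Real.sqrt βmin * (1 + ((k : ℝ) - 1) / γ) ≤ Real.sqrt (β k) * θ k := by
    intro k hk
    induction k, hk using Nat.le_induction with
    | base =>
      rw [hθ1]
      have h := Real.sqrt_le_sqrt (hβrange 1 le_rfl).1
      norm_num
      linarith
    | succ k hk ih =>
      have hk1 : (1:ℝ) ≤ (k:ℝ) := by exact_mod_cast hk
      have hβk : (0:ℝ) < β k := hβ k hk
      have hβk1 : (0:ℝ) < β (k+1) := hβ (k+1) (by omega)
      have hsk : (0:ℝ) < Real.sqrt (β k) := Real.sqrt_pos.mpr hβk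
      have hsk1 : (0:ℝ) < Real.sqrt (β (k+1)) := Real.sqrt_pos.mpr hβk1
      have hcoef : (0:ℝ) < Real.sqrt βmin * (1 + ((k:ℝ) - 1) / γ) := by
        have : (0:ℝ) ≤ ((k:ℝ) - 1) / γ := div_nonneg (by linarith) (le_of_lt hγ0)
        nlinarith
      have hθk0 : 0 ≤ θ k := by nlinarith
      have h2 : 2 ≤ k + 1 := by omega
      have heq := hθ (k+1) h2
      rw [show (k + 1) - 1 = k from by omega] at heq
      -- √(b + (β k / β (k+1)) θ k ^2) ≥ √(β k) θ k / √(β (k+1))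
      have hsq : Real.sqrt (β k) * θ k / Real.sqrt (β (k+1))
          ≤ Real.sqrt (b + β k / β (k+1) * θ k ^ 2) := by
        have e1 : Real.sqrt (β k / β (k+1) * θ k ^ 2)
            = Real.sqrt (β k) * θ k / Real.sqrt (β (k+1)) := by
          rw [Real.sqrt_mul (le_of_lt (div_pos hβk hβk1)), Real.sqrt_sq hθk0,
            Real.sqrt_div (le_of_lt hβk)]
          ring
        rw [← e1]
        exact Real.sqrt_le_sqrt (by nlinarith)
      have hkey : 1 / γ + Real.sqrt (β k) * θ k / Real.sqrt (β (k+1)) ≤ θ (k+1) := by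
        rw [heq]; linarith
      have hmul := mul_le_mul_of_nonneg_left hkey (le_of_lt hsk1)
      have hcancel : Real.sqrt (β (k+1)) * (Real.sqrt (β k) * θ k / Real.sqrt (β (k+1)))
          = Real.sqrt (β k) * θ k := by
        field_simp
      rw [mul_add, hcancel] at hmul
      have hsmin : Real.sqrt βmin ≤ Real.sqrt (β (k+1)) :=
        Real.sqrt_le_sqrt (hβrange (k+1) (by omega)).1
      have hdiv : Real.sqrt βmin * (1/γ) ≤ Real.sqrt (β (k+1)) * (1/γ) := by
        apply mul_le_mul_of_nonneg_right hsmin (by positivity)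
      push_cast
      calc Real.sqrt βmin * (1 + ((k:ℝ) + 1 - 1) / γ)
          = Real.sqrt βmin * (1/γ) + Real.sqrt βmin * (1 + ((k:ℝ) - 1) / γ) := by ring
        _ ≤ Real.sqrt (β (k+1)) * (1/γ) + Real.sqrt (β k) * θ k := by linarith
        _ ≤ Real.sqrt (β (k+1)) * θ (k+1) := by linarith
  have main : ∀ k, 1 ≤ k →
      θ k ≥ (1 + ((k : ℝ) - 1) / γ) * Real.sqrt (βmin / βmax) := by
    intro k hk
    have hk1 : (1:ℝ) ≤ (k:ℝ) := by exact_mod_cast hk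
    have hβk : (0:ℝ) < β k := hβ k hk
    have hsk : (0:ℝ) < Real.sqrt (β k) := Real.sqrt_pos.mpr hβk
    have hskmax : Real.sqrt (β k) ≤ Real.sqrt βmax :=
      Real.sqrt_le_sqrt (hβrange k hk).2
    have h := main2 k hk
    have hcoef : (0:ℝ) ≤ 1 + ((k:ℝ) - 1) / γ := by
      have : (0:ℝ) ≤ ((k:ℝ) - 1) / γ := div_nonneg (by linarith) (le_of_lt hγ0)
      linarith
    have hsmax : (0:ℝ) < Real.sqrt βmax := Real.sqrt_pos.mpr hβmax
    have hθk0 : 0 ≤ θ k := by nlinarith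
    have h2 : Real.sqrt βmin * (1 + ((k:ℝ) - 1) / γ) ≤ Real.sqrt βmax * θ k := by
      nlinarith
    rw [Real.sqrt_div (le_of_lt hβmin), ge_iff_le, mul_comm,
      div_mul_eq_mul_div, div_le_iff₀ hsmax]
    nlinarith
  refine ⟨main, ?_⟩
  have h1 : Filter.Tendsto (fun k : ℕ => (1 + ((k : ℝ) - 1) / γ) * Real.sqrt (βmin / βmax))
      Filter.atTop Filter.atTop := by
    apply Filter.Tendsto.atTop_mul_const (Real.sqrt_pos.mpr (div_pos hβmin hβmax))
    apply Filter.tendsto_atTop_add_const_left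
    apply Filter.Tendsto.atTop_div_const hγ0
    exact Filter.tendsto_atTop_add_const_right _ _ tendsto_natCast_atTop_atTop
  have h2 : (fun k : ℕ => (1 + ((k : ℝ) - 1) / γ) * Real.sqrt (βmin / βmax))
      ≤ᶠ[Filter.atTop] θ := by
    filter_upwards [Filter.eventually_ge_atTop 1] with k hk using main k hk
  exact Filter.tendsto_atTop_mono' Filter.atTop h2 h1
end

section
/- Let Φ be a real N×p matrix and let y ∈ ℝ^N satisfy y_n ≥ 0 for all n. Then the concentrated Poisson log-link negative log-likelihood L_c(x) = (Σ_{n=1}^{N} y_n)·ln(Σ_{n=1}^{N} exp(−(Φx)_n)) + Σ_{n=1}^{N} y_n·(Φx)_n is a convex function of x on all of ℝ^p. -/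
/-! `L_c` is a nonnegative multiple of log-sum-exp composed with the linear map `x ↦ -Φx`, plus a
linear function of `x`; so everything rests on the convexity of log-sum-exp. -/

open Finset Real

theorem sum_exp_sub_log_sum_exp {ι : Type*} [Fintype ι] [Nonempty ι] (z : ι → ℝ) :
    ∑ i, exp (z i - log (∑ j, exp (z j))) = 1 := by
  have hS : 0 < ∑ j, exp (z j) := sum_pos (fun j _ => exp_pos _) univ_nonempty
  simp only [exp_sub, exp_log hS, ← sum_div, div_self hS.ne']

theorem convexOn_log_sum_exp {ι : Type*} [Fintype ι] :
    ConvexOn ℝ Set.univ fun z : ι → ℝ => log (∑ i, exp (z i)) := by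
  cases isEmpty_or_nonempty ι
  · simpa using convexOn_const (0 : ℝ) convex_univ
  refine ⟨convex_univ, fun z _ w _ a b ha hb hab => ?_⟩
  set A := log (∑ i, exp (z i))
  set B := log (∑ i, exp (w i))
  -- Normalising by the softmax denominators reduces the claim to convexity of `exp`.
  have hterm : ∀ i, exp ((a • z + b • w) i) ≤
      (a * exp (z i - A) + b * exp (w i - B)) * exp (a * A + b * B) := by
    intro i
    calc exp ((a • z + b • w) i) = exp (a * (z i - A) + b * (w i - B)) * exp (a * A + b * B) := by
          rw [← exp_add]; simp only [Pi.add_apply, Pi.smul_apply, smul_eq_mul]; congr 1; ring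
      _ ≤ _ := by
          gcongr
          exact convexOn_exp.2 (Set.mem_univ _) (Set.mem_univ _) ha hb hab
  rw [smul_eq_mul, smul_eq_mul, log_le_iff_le_exp (sum_pos (fun i _ => exp_pos _) univ_nonempty)]
  calc ∑ i, exp ((a • z + b • w) i)
      ≤ ∑ i, (a * exp (z i - A) + b * exp (w i - B)) * exp (a * A + b * B) :=
        sum_le_sum fun i _ => hterm i
    _ = exp (a * A + b * B) := by
        rw [← sum_mul, sum_add_distrib, ← mul_sum, ← mul_sum, sum_exp_sub_log_sum_exp,
          sum_exp_sub_log_sum_exp, mul_one, mul_one, hab, one_mul]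

/-- For a real `N×p` matrix `Φ` and nonnegative `y ∈ ℝ^N`, the
concentrated Poisson log-link negative log-likelihood
`L_c(x) = (Σ_n y_n) ln(Σ_n exp(−(Φx)_n)) + Σ_n y_n (Φx)_n` is convex on all of `ℝ^p`. -/
theorem concentrated_poisson_nll_convex (N p : ℕ)
    (Φ : Matrix (Fin N) (Fin p) ℝ) (y : Fin N → ℝ) (hy : ∀ n, 0 ≤ y n) :
    ConvexOn ℝ Set.univ (fun x : Fin p → ℝ =>
      (∑ n, y n) * Real.log (∑ n, Real.exp (-(Φ.mulVec x n))) +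
        ∑ n, y n * Φ.mulVec x n) := by
  have hlse : ConvexOn ℝ Set.univ fun x : Fin p → ℝ => log (∑ n, exp (-(Φ.mulVec x n))) := by
    simpa [Function.comp_def, Matrix.neg_mulVec] using
      convexOn_log_sum_exp.comp_linearMap (-Φ).mulVecLin
  have hlin : ConvexOn ℝ Set.univ fun x : Fin p → ℝ => ∑ n, y n * Φ.mulVec x n := by
    simpa [Function.comp_def, dotProduct] using
      (dotProductBilin ℝ ℝ y ∘ₗ Φ.mulVecLin).convexOn convex_univ
  exact (hlse.smul (sum_nonneg fun n _ => hy n)).add hlin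
end
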